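/- Let G be a finite simple graph of order p ≥ 3 and size q ≥ 2 with no isolated vertices and no K_2 component, having exactly k ≥ 1 pendant edges. If f is a local total antimagic labeling of G whose induced weights take exactly k + 1 distinct values, then f assigns the label p + q to a pendant vertex or to a pendant edge. -/

import Mathlib

/-!
Every pendant edge carries a label `≤ p + q` which is also the weight of its pendant vertex,
so there are at least `k` distinct weights `≤ p + q`. If `p + q` sat on a vertex of degree
`≥ 2`, two of its incident edges would get distinct weights `> p + q`; if it sat on an edge whose
endpoints both have degree `≥ 2`, these endpoints would get distinct weights `> p + q`. Either
way there would be at least `k + 2` weights.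
-/

open scoped Classical

namespace LTA

variable {V : Type*} {W : Type*}

/-- The induced weight of an edge: the sum of the labels of its two endpoints. -/
noncomputable def eWeight (fV : V → ℕ) : Sym2 V → ℕ :=
  Sym2.lift ⟨fun a b => fV a + fV b, fun a b => Nat.add_comm _ _⟩

/-- The induced weight of a vertex: the sum of the labels of its incident edges. -/
noncomputable def vWeight [Fintype V] (G : SimpleGraph V) (fE : Sym2 V → ℕ) (v : V) : ℕ :=
  ∑ e ∈ G.edgeFinset, if v ∈ e then fE e else 0

/-- A total labeling: the labels form a bijection from `V ∪ E` onto `{1, …, p + q}`. -/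
def IsTotalLabeling [Fintype V] (G : SimpleGraph V) (fV : V → ℕ) (fE : Sym2 V → ℕ) : Prop :=
  Function.Injective (Sum.elim fV (fun e : G.edgeSet => fE e.1)) ∧
    Set.range (Sum.elim fV (fun e : G.edgeSet => fE e.1)) =
      Set.Icc 1 (Fintype.card V + G.edgeFinset.card)

/-- A local total antimagic labeling. -/
def IsLocalTotalAntimagic [Fintype V] (G : SimpleGraph V) (fV : V → ℕ) (fE : Sym2 V → ℕ) :
    Prop :=
  IsTotalLabeling G fV fE ∧
    (∀ u v, G.Adj u v → vWeight G fE u ≠ vWeight G fE v) ∧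
    (∀ e₁ ∈ G.edgeSet, ∀ e₂ ∈ G.edgeSet, e₁ ≠ e₂ → (∃ v, v ∈ e₁ ∧ v ∈ e₂) →
      eWeight fV e₁ ≠ eWeight fV e₂) ∧
    (∀ v : V, ∀ e ∈ G.edgeSet, v ∈ e → vWeight G fE v ≠ eWeight fV e)

/-- The number of distinct induced weights of a total labeling. -/
noncomputable def weightCount [Fintype V] (G : SimpleGraph V) (fV : V → ℕ)
    (fE : Sym2 V → ℕ) : ℕ :=
  (Finset.image (vWeight G fE) Finset.univ ∪ Finset.image (eWeight fV) G.edgeFinset).card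

/-- The local total antimagic chromatic number `χ_lt`. -/
noncomputable def chiLT [Fintype V] (G : SimpleGraph V) : ℕ :=
  sInf {n | ∃ fV fE, IsLocalTotalAntimagic G fV fE ∧ weightCount G fV fE = n}

/-- A pendant edge: an edge incident to a vertex of degree 1. -/
def IsPendantEdge [Fintype V] (G : SimpleGraph V) (e : Sym2 V) : Prop :=
  e ∈ G.edgeSet ∧ ∃ v ∈ e, G.degree v = 1

/-- The number of pendant edges of `G`. -/
noncomputable def pendantEdgeCount [Fintype V] (G : SimpleGraph V) : ℕ :=
  (G.edgeFinset.filter fun e => ∃ v ∈ e, G.degree v = 1).card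

/-- A local antimagic (edge) labeling: a bijection from the edges onto `{1, …, q}` such that
adjacent vertices get distinct induced vertex weights. -/
def IsLocalAntimagic [Fintype V] (G : SimpleGraph V) (fE : Sym2 V → ℕ) : Prop :=
  Set.InjOn fE G.edgeSet ∧ fE '' G.edgeSet = Set.Icc 1 G.edgeFinset.card ∧
    ∀ u v, G.Adj u v → vWeight G fE u ≠ vWeight G fE v

/-- The local antimagic chromatic number `χ_la`. -/
noncomputable def chiLA [Fintype V] (G : SimpleGraph V) : ℕ :=
  sInf {n | ∃ fE, IsLocalAntimagic G fE ∧ (Finset.image (vWeight G fE) Finset.univ).card = n}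

/-- A local edge antimagic (vertex) labeling: a bijection from the vertices onto `{1, …, p}`
such that edges sharing an endpoint get distinct induced edge weights. -/
def IsLocalEdgeAntimagic [Fintype V] (G : SimpleGraph V) (fV : V → ℕ) : Prop :=
  Function.Injective fV ∧ Set.range fV = Set.Icc 1 (Fintype.card V) ∧
    ∀ e₁ ∈ G.edgeSet, ∀ e₂ ∈ G.edgeSet, e₁ ≠ e₂ → (∃ v, v ∈ e₁ ∧ v ∈ e₂) →
      eWeight fV e₁ ≠ eWeight fV e₂

/-- The local edge antimagic chromatic number `χ_lea`. -/
noncomputable def chiLEA [Fintype V] (G : SimpleGraph V) : ℕ :=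
  sInf {n | ∃ fV, IsLocalEdgeAntimagic G fV ∧ (Finset.image (eWeight fV) G.edgeFinset).card = n}

/-- The disjoint union of `m` copies of `G`. -/
def copies (m : ℕ) (G : SimpleGraph V) : SimpleGraph (Fin m × V) where
  Adj x y := x.1 = y.1 ∧ G.Adj x.2 y.2
  symm := ⟨fun x y h => ⟨h.1.symm, h.2.symm⟩⟩
  loopless := ⟨fun x h => G.loopless.irrefl x.2 h.2⟩

/-- The graph obtained from `G` by attaching `s` pendant edges to the vertex `v`. -/
def attachPendants (G : SimpleGraph V) (v : V) (s : ℕ) : SimpleGraph (V ⊕ Fin s) :=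
  SimpleGraph.fromRel (fun x y =>
    (∃ a b, G.Adj a b ∧ x = Sum.inl a ∧ y = Sum.inl b) ∨
    (∃ i : Fin s, x = Sum.inl v ∧ y = Sum.inr i))

/-- The fan graph `f_n` (n triangles sharing a common vertex) with `k` pendant edges attached
to every degree-2 vertex: `f_n(k)`.  The common vertex is `Sum.inl none`, the outer vertices
are `Sum.inl (some w)`, and the pendant vertices are `Sum.inr (w, t)`. -/
def fanGraph (n k : ℕ) :
    SimpleGraph (Option (Fin n × Fin 2) ⊕ (Fin n × Fin 2) × Fin k) :=
  SimpleGraph.fromRel (fun x y =>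
    (∃ w, x = Sum.inl none ∧ y = Sum.inl (some w)) ∨
    (∃ i : Fin n, x = Sum.inl (some (i, 0)) ∧ y = Sum.inl (some (i, 1))) ∨
    (∃ w t, x = Sum.inl (some w) ∧ y = Sum.inr (w, t)))

@[simp]
theorem eWeight_mk (fV : V → ℕ) (u v : V) : eWeight fV s(u, v) = fV u + fV v := rfl

section MaxLabel

variable [Fintype V] {G : SimpleGraph V} {fV : V → ℕ} {fE : Sym2 V → ℕ}

noncomputable def weightSet (G : SimpleGraph V) (fV : V → ℕ) (fE : Sym2 V → ℕ) : Finset ℕ :=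
  Finset.image (vWeight G fE) Finset.univ ∪ Finset.image (eWeight fV) G.edgeFinset

theorem card_weightSet : (weightSet G fV fE).card = weightCount G fV fE := rfl

theorem vWeight_mem_weightSet (v : V) : vWeight G fE v ∈ weightSet G fV fE :=
  Finset.mem_union_left _ (Finset.mem_image_of_mem _ (Finset.mem_univ v))

theorem eWeight_mem_weightSet {e : Sym2 V} (he : e ∈ G.edgeSet) :
    eWeight fV e ∈ weightSet G fV fE :=
  Finset.mem_union_right _ (Finset.mem_image_of_mem _ (G.mem_edgeFinset.mpr he))

theorem vWeight_eq_sum_incidenceFinset (v : V) :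
    vWeight G fE v = ∑ e ∈ G.incidenceFinset v, fE e := by
  rw [vWeight, G.incidenceFinset_eq_filter, Finset.sum_filter]

theorem vWeight_eq_of_degree_eq_one {v : V} {e : Sym2 V} (hdeg : G.degree v = 1)
    (he : e ∈ G.edgeSet) (hv : v ∈ e) : vWeight G fE v = fE e := by
  obtain ⟨a, ha⟩ := Finset.card_eq_one.mp ((G.card_incidenceFinset_eq_degree v).trans hdeg)
  have hea : e ∈ G.incidenceFinset v := (G.mem_incidenceFinset v e).mpr ⟨he, hv⟩
  rw [ha, Finset.mem_singleton] at hea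
  rw [vWeight_eq_sum_incidenceFinset, ha, Finset.sum_singleton, hea]

namespace IsTotalLabeling

theorem fV_mem_Icc (hf : IsTotalLabeling G fV fE) (v : V) :
    fV v ∈ Set.Icc 1 (Fintype.card V + G.edgeFinset.card) :=
  hf.2 ▸ ⟨Sum.inl v, rfl⟩

theorem fE_mem_Icc (hf : IsTotalLabeling G fV fE) {e : Sym2 V} (he : e ∈ G.edgeSet) :
    fE e ∈ Set.Icc 1 (Fintype.card V + G.edgeFinset.card) :=
  hf.2 ▸ ⟨Sum.inr ⟨e, he⟩, rfl⟩

theorem injOn_fE (hf : IsTotalLabeling G fV fE) : Set.InjOn fE G.edgeSet :=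
  fun e₁ h₁ e₂ h₂ h => congrArg Subtype.val
    (Sum.inr_injective (hf.1 (a₁ := Sum.inr ⟨e₁, h₁⟩) (a₂ := Sum.inr ⟨e₂, h₂⟩) h))

theorem exists_eq_of_mem_Icc (hf : IsTotalLabeling G fV fE) {n : ℕ}
    (hn : n ∈ Set.Icc 1 (Fintype.card V + G.edgeFinset.card)) :
    (∃ v, fV v = n) ∨ ∃ e ∈ G.edgeSet, fE e = n := by
  obtain ⟨v | ⟨e, he⟩, rfl⟩ := hf.2.symm ▸ hn
  exacts [Or.inl ⟨v, rfl⟩, Or.inr ⟨e, he, rfl⟩]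

theorem fV_lt_eWeight (hf : IsTotalLabeling G fV fE) {v : V} {e : Sym2 V} (hv : v ∈ e) :
    fV v < eWeight fV e := by
  obtain ⟨w, rfl⟩ := Sym2.mem_iff_exists.mp hv
  have := (hf.fV_mem_Icc w).1
  simp only [eWeight_mk]
  omega

theorem fE_lt_vWeight (hf : IsTotalLabeling G fV fE) {v : V} {e : Sym2 V}
    (hdeg : 2 ≤ G.degree v) (he : e ∈ G.edgeSet) (hv : v ∈ e) : fE e < vWeight G fE v := by
  have hmem : e ∈ G.incidenceFinset v := (G.mem_incidenceFinset v e).mpr ⟨he, hv⟩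
  obtain ⟨e', he', hne⟩ := Finset.exists_mem_ne (by rwa [G.card_incidenceFinset_eq_degree]) e
  have hpos := (hf.fE_mem_Icc ((G.mem_incidenceFinset v e').mp he').1).1
  calc fE e < fE e + fE e' := by omega
    _ = ∑ x ∈ {e, e'}, fE x := (Finset.sum_pair hne.symm).symm
    _ ≤ ∑ x ∈ G.incidenceFinset v, fE x :=
        Finset.sum_le_sum_of_subset
          (Finset.insert_subset hmem (Finset.singleton_subset_iff.mpr he'))
    _ = vWeight G fE v := (vWeight_eq_sum_incidenceFinset v).symm

theorem pendantEdgeCount_le_card_filter_weightSet (hf : IsTotalLabeling G fV fE) :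
    pendantEdgeCount G ≤
      ((weightSet G fV fE).filter (· ≤ Fintype.card V + G.edgeFinset.card)).card := by
  refine Finset.card_le_card_of_injOn fE (fun e he => ?_) fun e₁ h₁ e₂ h₂ h =>
    hf.injOn_fE (G.mem_edgeFinset.mp (Finset.mem_filter.mp h₁).1)
      (G.mem_edgeFinset.mp (Finset.mem_filter.mp h₂).1) h
  obtain ⟨heE, v, hv, hdeg⟩ := Finset.mem_filter.mp (Finset.mem_coe.mp he)
  rw [G.mem_edgeFinset] at heE
  refine Finset.mem_filter.mpr ⟨?_, (hf.fE_mem_Icc heE).2⟩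
  rw [← vWeight_eq_of_degree_eq_one (fE := fE) hdeg heE hv]
  exact vWeight_mem_weightSet v

theorem pendantEdgeCount_add_two_le_weightCount (hf : IsTotalLabeling G fV fE) {a b : ℕ}
    (ha : a ∈ weightSet G fV fE) (hb : b ∈ weightSet G fV fE) (hab : a ≠ b)
    (ha' : Fintype.card V + G.edgeFinset.card < a) (hb' : Fintype.card V + G.edgeFinset.card < b) :
    pendantEdgeCount G + 2 ≤ weightCount G fV fE := by
  have hlarge : 2 ≤ ((weightSet G fV fE).filter
      (fun w => ¬ w ≤ Fintype.card V + G.edgeFinset.card)).card := by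
    rw [← Finset.card_pair hab]
    refine Finset.card_le_card (Finset.insert_subset ?_ (Finset.singleton_subset_iff.mpr ?_))
    exacts [Finset.mem_filter.mpr ⟨ha, by omega⟩, Finset.mem_filter.mpr ⟨hb, by omega⟩]
  rw [← card_weightSet, ← Finset.card_filter_add_card_filter_not
    (· ≤ Fintype.card V + G.edgeFinset.card)]
  have := hf.pendantEdgeCount_le_card_filter_weightSet
  omega

end IsTotalLabeling

namespace IsLocalTotalAntimagic

theorem degree_eq_one_of_fV_eq_max (hf : IsLocalTotalAntimagic G fV fE)
    (hiso : ∀ v : V, 0 < G.degree v) (hw : weightCount G fV fE ≤ pendantEdgeCount G + 1) {v : V}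
    (hv : fV v = Fintype.card V + G.edgeFinset.card) : G.degree v = 1 := by
  by_contra hdeg
  have hdeg2 : 1 < (G.incidenceFinset v).card := by
    have := hiso v
    rw [G.card_incidenceFinset_eq_degree]
    omega
  obtain ⟨e₁, he₁, e₂, he₂, hne⟩ := Finset.one_lt_card.mp hdeg2
  rw [G.mem_incidenceFinset] at he₁ he₂
  have := hf.1.pendantEdgeCount_add_two_le_weightCount (eWeight_mem_weightSet he₁.1)
    (eWeight_mem_weightSet he₂.1) (hf.2.2.1 e₁ he₁.1 e₂ he₂.1 hne ⟨v, he₁.2, he₂.2⟩)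
    (hv ▸ hf.1.fV_lt_eWeight he₁.2) (hv ▸ hf.1.fV_lt_eWeight he₂.2)
  omega

theorem isPendantEdge_of_fE_eq_max (hf : IsLocalTotalAntimagic G fV fE)
    (hw : weightCount G fV fE ≤ pendantEdgeCount G + 1) {e : Sym2 V} (he : e ∈ G.edgeSet)
    (hN : fE e = Fintype.card V + G.edgeFinset.card) : IsPendantEdge G e := by
  refine ⟨he, ?_⟩
  by_contra! hdeg
  induction e using Sym2.ind with | h u w => ?_
  have hadj : G.Adj u w := he
  have hdeg2 : ∀ x ∈ s(u, w), 2 ≤ G.degree x := by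
    intro x hx
    have hpos : ∃ y, G.Adj x y := by
      rcases Sym2.mem_iff.mp hx with rfl | rfl
      exacts [⟨w, hadj⟩, ⟨u, hadj.symm⟩]
    have := (G.degree_pos_iff_exists_adj x).mpr hpos
    have := hdeg x hx
    omega
  have hu := hN ▸ hf.1.fE_lt_vWeight (hdeg2 u (Sym2.mem_mk_left u w)) he
    (Sym2.mem_mk_left u w)
  have hw' := hN ▸ hf.1.fE_lt_vWeight (hdeg2 w (Sym2.mem_mk_right u w)) he
    (Sym2.mem_mk_right u w)
  have := hf.1.pendantEdgeCount_add_two_le_weightCount (vWeight_mem_weightSet u)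
    (vWeight_mem_weightSet w) (hf.2.1 u w hadj) hu hw'
  omega

end IsLocalTotalAntimagic

end MaxLabel

theorem stmt1_general {V : Type*} [Fintype V] (G : SimpleGraph V) (k : ℕ)
    (hp : 3 ≤ Fintype.card V)
    (hiso : ∀ v : V, 0 < G.degree v)
    (hpend : pendantEdgeCount G = k)
    (fV : V → ℕ) (fE : Sym2 V → ℕ)
    (hf : IsLocalTotalAntimagic G fV fE)
    (hw : weightCount G fV fE = k + 1) :
    (∃ v : V, G.degree v = 1 ∧ fV v = Fintype.card V + G.edgeFinset.card) ∨
    (∃ e : Sym2 V, IsPendantEdge G e ∧ fE e = Fintype.card V + G.edgeFinset.card) := by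
  have hcount : weightCount G fV fE ≤ pendantEdgeCount G + 1 := by omega
  have hmax : Fintype.card V + G.edgeFinset.card ∈
      Set.Icc 1 (Fintype.card V + G.edgeFinset.card) := ⟨by omega, le_rfl⟩
  rcases hf.1.exists_eq_of_mem_Icc hmax with ⟨v, hv⟩ | ⟨e, he, heN⟩
  · exact Or.inl ⟨v, hf.degree_eq_one_of_fV_eq_max hiso hcount hv, hv⟩
  · exact Or.inr ⟨e, hf.isPendantEdge_of_fE_eq_max hcount he heN, heN⟩

/-- if a graph of order `p ≥ 3` and size `q ≥ 2` with no isolated vertices, no `K₂`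
component and exactly `k ≥ 1` pendant edges has a local total antimagic labeling with exactly
`k + 1` distinct induced weights, then the label `p + q` is assigned to a pendant vertex or to a
pendant edge. -/
theorem stmt1 {V : Type*} [Fintype V] (G : SimpleGraph V) (k : ℕ)
    (hp : 3 ≤ Fintype.card V) (hq : 2 ≤ G.edgeFinset.card)
    (hiso : ∀ v : V, 0 < G.degree v)
    (hK2 : ¬ ∃ u v : V, G.Adj u v ∧ G.degree u = 1 ∧ G.degree v = 1)
    (hk : 1 ≤ k) (hpend : pendantEdgeCount G = k)
    (fV : V → ℕ) (fE : Sym2 V → ℕ)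
    (hf : IsLocalTotalAntimagic G fV fE)
    (hw : weightCount G fV fE = k + 1) :
    (∃ v : V, G.degree v = 1 ∧ fV v = Fintype.card V + G.edgeFinset.card) ∨
    (∃ e : Sym2 V, IsPendantEdge G e ∧ fE e = Fintype.card V + G.edgeFinset.card) :=
  stmt1_general G k hp hiso hpend fV fE hf hw

end LTA
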